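/- Suppose ρ: D → ℝ is C¹ and strictly positive on D \ {0}, f: D → ℝⁿ is C¹, β: D → ℝ satisfies β(x) ≥ 1 for all x, and for all x ∈ D \ {0}: div(ρ·f)(x) ≤ β(x)·ρ(x)²·div(ρ⁻¹·f)(x) and div f(x) ≤ 0. Then ⟨grad ρ(x), f(x)⟩ ≤ 0 for all x ∈ D \ {0}. -/

import Mathlib

/-!
Write `g = ⟪∇ρ, f⟫` and `d = div f`. The product rule gives `div (ρ f) = ρ d + g` and
`div (ρ⁻¹ f) = ρ⁻¹ d - g / ρ²`, so the first hypothesis becomes `ρ d + g ≤ β ρ d - β g`,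
i.e. `(1 + β) g ≤ (β - 1) ρ d`. The right-hand side is `≤ 0` because `β ≥ 1`, `ρ > 0`
and `d ≤ 0`.
-/

open scoped BigOperators RealInnerProductSpace

/-- Divergence of a vector field on ℝⁿ. -/
noncomputable def vdiv {n : ℕ} (f : EuclideanSpace ℝ (Fin n) → EuclideanSpace ℝ (Fin n))
    (x : EuclideanSpace ℝ (Fin n)) : ℝ :=
  ∑ i, fderiv ℝ f x (EuclideanSpace.single i (1:ℝ)) i

theorem EuclideanSpace.map_eq_sum_smul_map_single {ι M : Type*} [Fintype ι] [DecidableEq ι]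
    [AddCommMonoid M] [Module ℝ M] {F : Type*} [FunLike F (EuclideanSpace ℝ ι) M]
    [LinearMapClass F ℝ (EuclideanSpace ℝ ι) M] (L : F) (v : EuclideanSpace ℝ ι) :
    L v = ∑ i, v i • L (EuclideanSpace.single i 1) := by
  conv_lhs => rw [← (EuclideanSpace.basisFun ι ℝ).sum_repr v]
  simp [map_sum, map_smul]

theorem fderiv_inv_apply {E : Type*} [NormedAddCommGroup E] [NormedSpace ℝ E]
    {c : E → ℝ} {x : E}
    (hc : DifferentiableAt ℝ c x) (hx : c x ≠ 0) (v : E) :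
    fderiv ℝ (fun y => (c y)⁻¹) x v = -fderiv ℝ c x v / c x ^ 2 := by
  have h := (hasFDerivAt_inv hx).comp x hc.hasFDerivAt
  rw [show (fun y => (c y)⁻¹) = Inv.inv ∘ c from rfl, h.fderiv]
  simp [div_eq_mul_inv]

theorem vdiv_smul {n : ℕ} {c : EuclideanSpace ℝ (Fin n) → ℝ}
    {f : EuclideanSpace ℝ (Fin n) → EuclideanSpace ℝ (Fin n)} {x : EuclideanSpace ℝ (Fin n)}
    (hc : DifferentiableAt ℝ c x) (hf : DifferentiableAt ℝ f x) :
    vdiv (fun y => c y • f y) x = c x * vdiv f x + fderiv ℝ c x (f x) := by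
  rw [vdiv, vdiv, fderiv_fun_smul hc hf,
    EuclideanSpace.map_eq_sum_smul_map_single (fderiv ℝ c x) (f x),
    Finset.mul_sum, ← Finset.sum_add_distrib]
  simp [mul_comm]

theorem vdiv_inv_smul {n : ℕ} {c : EuclideanSpace ℝ (Fin n) → ℝ}
    {f : EuclideanSpace ℝ (Fin n) → EuclideanSpace ℝ (Fin n)} {x : EuclideanSpace ℝ (Fin n)}
    (hc : DifferentiableAt ℝ c x) (hx : c x ≠ 0) (hf : DifferentiableAt ℝ f x) :
    vdiv (fun y => (c y)⁻¹ • f y) x = (c x)⁻¹ * vdiv f x - fderiv ℝ c x (f x) / c x ^ 2 := by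
  rw [vdiv_smul (c := fun y => (c y)⁻¹) (hc.inv hx) hf, fderiv_inv_apply hc hx, neg_div,
    ← sub_eq_add_neg]

theorem grad_inner_nonpos_case3_general {n : ℕ} (D : Set (EuclideanSpace ℝ (Fin n))) (hD : IsOpen D)
    (ρ : EuclideanSpace ℝ (Fin n) → ℝ) (f : EuclideanSpace ℝ (Fin n) → EuclideanSpace ℝ (Fin n))
    (β : EuclideanSpace ℝ (Fin n) → ℝ) (hβ : ∀ x, 1 ≤ β x)
    (hρ : ContDiffOn ℝ 1 ρ D) (hρpos : ∀ x ∈ D, x ≠ 0 → 0 < ρ x)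
    (hf : ContDiffOn ℝ 1 f D)
    (hdiv1 : ∀ x ∈ D, x ≠ 0 →
      vdiv (fun y => ρ y • f y) x ≤ β x * (ρ x) ^ 2 * vdiv (fun y => (ρ y)⁻¹ • f y) x)
    (hdiv2 : ∀ x ∈ D, x ≠ 0 → vdiv f x ≤ 0) :
    ∀ x ∈ D, x ≠ 0 → ⟪gradient ρ x, f x⟫ ≤ 0 := by
  intro x hx hx0
  have hρd : DifferentiableAt ℝ ρ x :=
    (hρ.contDiffAt (hD.mem_nhds hx)).differentiableAt one_ne_zero
  have hfd : DifferentiableAt ℝ f x :=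
    (hf.contDiffAt (hD.mem_nhds hx)).differentiableAt one_ne_zero
  have hρx := hρpos x hx hx0
  have h1 := hdiv1 x hx hx0
  rw [vdiv_smul hρd hfd, vdiv_inv_smul hρd hρx.ne' hfd] at h1
  have hdiv2x : (β x - 1) * ρ x * vdiv f x ≤ 0 :=
    mul_nonpos_of_nonneg_of_nonpos (mul_nonneg (sub_nonneg.2 (hβ x)) hρx.le) (hdiv2 x hx hx0)
  have key : (1 + β x) * fderiv ℝ ρ x (f x) ≤ 0 := by
    field_simp at h1
    linarith
  rw [inner_gradient_left]
  exact nonpos_of_mul_nonpos_right key (by linarith [hβ x])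

theorem grad_inner_nonpos_case3 {n : ℕ} (D : Set (EuclideanSpace ℝ (Fin n))) (hD : IsOpen D)
    (h0 : (0 : EuclideanSpace ℝ (Fin n)) ∈ D)
    (ρ : EuclideanSpace ℝ (Fin n) → ℝ) (f : EuclideanSpace ℝ (Fin n) → EuclideanSpace ℝ (Fin n))
    (β : EuclideanSpace ℝ (Fin n) → ℝ) (hβ : ∀ x, 1 ≤ β x)
    (hρ : ContDiffOn ℝ 1 ρ D) (hρpos : ∀ x ∈ D, x ≠ 0 → 0 < ρ x)
    (hf : ContDiffOn ℝ 1 f D)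
    (hdiv1 : ∀ x ∈ D, x ≠ 0 →
      vdiv (fun y => ρ y • f y) x ≤ β x * (ρ x) ^ 2 * vdiv (fun y => (ρ y)⁻¹ • f y) x)
    (hdiv2 : ∀ x ∈ D, x ≠ 0 → vdiv f x ≤ 0) :
    ∀ x ∈ D, x ≠ 0 → ⟪gradient ρ x, f x⟫ ≤ 0 :=
  grad_inner_nonpos_case3_general D hD ρ f β hβ hρ hρpos hf hdiv1 hdiv2
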